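/- Let L₁ = {aⁱ bʲ t aᵏ : i, k ≥ 1, j ≥ 2}, a language over three distinct letters a, b, t of 𝔄. Then the 7-element monoid A¹ and the syntactic monoid M_synt(L₁) satisfy exactly the same identities (they generate the same variety 𝔸¹). -/

import Mathlib

/-- Words over the countably infinite alphabet `ℕ`. -/
abbrev Word : Type := List ℕ

/-- A monoid `M` satisfies the identity `u ≈ v` if every substitution of letters by
elements of `M` (equivalently, every monoid homomorphism from the free monoid) equalizes
`u` and `v`. -/
def Satisfies (M : Type*) [Monoid M] (u v : Word) : Prop :=
  ∀ φ : ℕ → M, (u.map φ).prod = (v.map φ).prod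

/-- A set of words `W` is stable with respect to a monoid `M`. -/
def Stable (W : Set Word) (M : Type*) [Monoid M] : Prop :=
  ∀ u v : Word, u ∈ W → Satisfies M u v → v ∈ W

/-- `u` is a `τ`-term for the monoid `M`. -/
def IsTerm (τ : Word → Word → Prop) (M : Type*) [Monoid M] (u : Word) : Prop :=
  ∀ v : Word, Satisfies M u v → τ u v

/-- The set of simple letters of a word. -/
def simpSet (u : Word) : Set ℕ := {x | u.count x = 1}

/-- The set of multiple letters of a word. -/
def mulSet (u : Word) : Set ℕ := {x | 2 ≤ u.count x}

/-- The set of letters of a word. -/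
def conSet (u : Word) : Set ℕ := {x | x ∈ u}

/-- The monoid congruence on the free monoid generated by the pairs `(a, a²)`. -/
inductive tau1 : Word → Word → Prop
  | base (a : ℕ) : tau1 [a] [a, a]
  | refl (u : Word) : tau1 u u
  | symm {u v : Word} : tau1 u v → tau1 v u
  | trans {u v x : Word} : tau1 u v → tau1 v x → tau1 u x
  | append {u v u' v' : Word} : tau1 u v → tau1 u' v' → tau1 (u ++ u') (v ++ v')

/-- The relation γ. -/
def gamma (u v : Word) : Prop := simpSet u = simpSet v ∧ mulSet u = mulSet v

/-- The relation `τ₁ ∧ γ`. -/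
def tau1gamma (u v : Word) : Prop := tau1 u v ∧ gamma u v

/-- A word is block-simple if every factor all of whose letters are multiple
(in particular, every block) involves at most one letter. -/
def BlockSimple (u : Word) : Prop :=
  ∀ p f s : Word, u = p ++ f ++ s → (∀ x ∈ f, x ∈ mulSet u) →
    ∀ x ∈ f, ∀ y ∈ f, x = y

/-- `assemble m t A = A 0 ++ t 0 :: A 1 ++ t 1 :: ... ++ t (m-1) :: A m`:
the word with blocks `A i` separated by the letters `t i`. -/
def assemble (m : ℕ) (t : Fin m → ℕ) (A : Fin (m + 1) → Word) : Word :=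
  A 0 ++ (List.ofFn fun i : Fin m => t i :: A i.succ).flatten

/-- Common core of the relations `β` and `∼_Q`: `u` and `v` decompose into blocks
separated by the same simple letters in the same order, corresponding blocks have the
same content; when `withOrder = true`, in corresponding blocks the order of first
occurrences of letters coincides. -/
def betaAux (withOrder : Bool) (u v : Word) : Prop :=
  ∃ (m : ℕ) (t : Fin m → ℕ) (A B : Fin (m + 1) → Word),
    u = assemble m t A ∧ v = assemble m t B ∧
    (∀ i : Fin m, u.count (t i) = 1) ∧ (∀ i : Fin m, v.count (t i) = 1) ∧
    (∀ i : Fin (m + 1), ∀ x ∈ A i, x ∈ mulSet u) ∧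
    (∀ i : Fin (m + 1), ∀ x ∈ B i, x ∈ mulSet v) ∧
    (∀ i : Fin (m + 1), ∀ x : ℕ, x ∈ A i ↔ x ∈ B i) ∧
    (withOrder = true → ∀ i : Fin (m + 1), ∀ x y : ℕ, x ∈ A i → y ∈ A i → x ≠ y →
      ((A i).idxOf x < (A i).idxOf y ↔ (B i).idxOf x < (B i).idxOf y))

/-- The relation β. -/
def beta : Word → Word → Prop := betaAux true

/-- The relation `∼_Q` (β without the condition on the order of first occurrences). -/
def simQ : Word → Word → Prop := betaAux false

/-- The words `u_n` (letters: `a = 0`, `b = 1`, `t_k = k + 1`). -/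
def uW : ℕ → Word
  | 0 => [0, 0, 1, 1]
  | k + 1 => (if k % 2 = 0 then 0 else 1) :: (k + 2) :: uW k

/-- The words `v_n` (letters: `a = 0`, `b = 1`, `t_k = k + 1`). -/
def vW : ℕ → Word
  | 0 => [1, 1, 0, 0]
  | k + 1 => (if k % 2 = 0 then 0 else 1) :: (k + 2) :: vW k

/-- A monoid satisfies the identity system
`Σ_n = {xtx ≈ xtx², xtx ≈ x²tx, xy²x ≈ x²y², u_n ≈ v_n}`. -/
def SatSigma (n : ℕ) (N : Type*) [Monoid N] : Prop :=
  Satisfies N [0, 1, 0] [0, 1, 0, 0] ∧ Satisfies N [0, 1, 0] [0, 0, 1, 0] ∧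
  Satisfies N [0, 1, 1, 0] [0, 0, 1, 1] ∧ Satisfies N (uW n) (vW n)

/-- A monoid is finitely based. -/
def FinBased (M : Type*) [Monoid M] : Prop :=
  ∃ S : Finset (Word × Word),
    (∀ p ∈ S, Satisfies M p.1 p.2) ∧
    ∀ (N : Type) [Monoid N], (∀ p ∈ S, Satisfies N p.1 p.2) →
      ∀ u v : Word, Satisfies M u v → Satisfies N u v

/-- `U_n = x y₁² y₂² ⋯ y_n² x` (letters: `x = 0`, `y_i = i`). -/
def Uw (n : ℕ) : Word := 0 :: (((List.range n).map fun i => [i + 1, i + 1]).flatten ++ [0])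

/-- `V_n = x y₁² x y₂² x ⋯ x y_n² x` (letters: `x = 0`, `y_i = i`). -/
def Vw (n : ℕ) : Word := 0 :: ((List.range n).map fun i => [i + 1, i + 1, 0]).flatten

/-- The language `a⁺bb⁺ta⁺ = {aⁱ bʲ t aᵏ : i, k ≥ 1, j ≥ 2}` (`a = 0`, `b = 1`, `t = 2`). -/
def Lab : Set Word := {w | ∃ i j k : ℕ, 1 ≤ i ∧ 2 ≤ j ∧ 1 ≤ k ∧
  w = List.replicate i 0 ++ List.replicate j 1 ++ 2 :: List.replicate k 0}

/-- The β-class of `atb²a` as an explicit language: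
`{aⁱ t bʲ a w : i ≥ 1, j ≥ 2} ∪ {aⁱ t bʲ aᵏ b w : i, j, k ≥ 1}`, `w ∈ {a,b}*`
(`a = 0`, `b = 1`, `t = 2`). -/
def LatBBa : Set Word :=
  {w | (∃ i j : ℕ, 1 ≤ i ∧ 2 ≤ j ∧ ∃ r : Word, (∀ x ∈ r, x = 0 ∨ x = 1) ∧
      w = List.replicate i 0 ++ 2 :: (List.replicate j 1 ++ 0 :: r)) ∨
    (∃ i j k : ℕ, 1 ≤ i ∧ 1 ≤ j ∧ 1 ≤ k ∧ ∃ r : Word, (∀ x ∈ r, x = 0 ∨ x = 1) ∧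
      w = List.replicate i 0 ++ 2 :: (List.replicate j 1 ++ (List.replicate k 0 ++ 1 :: r)))}

/-- `u` is a factor (subword) of `x`. -/
def IsFactorOf (u x : Word) : Prop := ∃ p s : Word, x = p ++ u ++ s

/-- The syntactic congruence of a language `W`. -/
def SyntCon (W : Set Word) : Con (FreeMonoid ℕ) where
  r u v := ∀ p s : Word,
    p ++ FreeMonoid.toList u ++ s ∈ W ↔ p ++ FreeMonoid.toList v ++ s ∈ W
  iseqv := ⟨fun _ _ _ => Iff.rfl, fun h p s => (h p s).symm,
    fun h h' p s => (h p s).trans (h' p s)⟩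
  mul' := by
    intro w x y z h h' p s
    have h1 := h p (FreeMonoid.toList y ++ s)
    have h2 := h' (p ++ FreeMonoid.toList x) s
    simp only [FreeMonoid.toList_mul, List.append_assoc] at h1 h2 ⊢
    exact h1.trans h2

/-- The syntactic monoid of a language `W`. -/
abbrev SyntMonoid (W : Set Word) : Type := (SyntCon W).Quotient

/-! ### Concrete finite monoids -/

/-- The 7-element monoid `A¹`: identity `e1` adjoined to the semigroup `A = ⟨a,b,c ∣ a²=a, b²=b, ab=ca=0, ac=cb=c⟩ = {a,b,c,ba,bc,0}` (`z0` is the zero). -/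
inductive A1M : Type
  | e1 | a | b | c | ba | bc | z0
deriving DecidableEq

/-- Multiplication of `A1M`. -/
def A1M.mul : A1M → A1M → A1M
  | .e1, .e1 => .e1
  | .e1, .a => .a
  | .e1, .b => .b
  | .e1, .c => .c
  | .e1, .ba => .ba
  | .e1, .bc => .bc
  | .e1, .z0 => .z0
  | .a, .e1 => .a
  | .a, .a => .a
  | .a, .b => .z0
  | .a, .c => .c
  | .a, .ba => .z0
  | .a, .bc => .z0
  | .a, .z0 => .z0
  | .b, .e1 => .b
  | .b, .a => .ba
  | .b, .b => .b
  | .b, .c => .bc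
  | .b, .ba => .ba
  | .b, .bc => .bc
  | .b, .z0 => .z0
  | .c, .e1 => .c
  | .c, .a => .z0
  | .c, .b => .c
  | .c, .c => .z0
  | .c, .ba => .z0
  | .c, .bc => .z0
  | .c, .z0 => .z0
  | .ba, .e1 => .ba
  | .ba, .a => .ba
  | .ba, .b => .z0
  | .ba, .c => .bc
  | .ba, .ba => .z0
  | .ba, .bc => .z0
  | .ba, .z0 => .z0
  | .bc, .e1 => .bc
  | .bc, .a => .z0
  | .bc, .b => .bc
  | .bc, .c => .z0
  | .bc, .ba => .z0
  | .bc, .bc => .z0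
  | .bc, .z0 => .z0
  | .z0, .e1 => .z0
  | .z0, .a => .z0
  | .z0, .b => .z0
  | .z0, .c => .z0
  | .z0, .ba => .z0
  | .z0, .bc => .z0
  | .z0, .z0 => .z0

instance : Monoid A1M where
  one := .e1
  mul := A1M.mul
  mul_assoc := by intro x y z; cases x <;> cases y <;> cases z <;> rfl
  one_mul := by intro x; cases x <;> rfl
  mul_one := by intro x; cases x <;> rfl
/-- The 6-element monoid `E¹`: identity `e1` adjoined to the semigroup `E = ⟨a,b,c ∣ a²=ab=0, ba=ca=a, b²=bc=b, c²=cb=c⟩ = {a,b,c,ac,0}` (`z0` is the zero). -/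
inductive E1M : Type
  | e1 | a | b | c | ac | z0
deriving DecidableEq

/-- Multiplication of `E1M`. -/
def E1M.mul : E1M → E1M → E1M
  | .e1, .e1 => .e1
  | .e1, .a => .a
  | .e1, .b => .b
  | .e1, .c => .c
  | .e1, .ac => .ac
  | .e1, .z0 => .z0
  | .a, .e1 => .a
  | .a, .a => .z0
  | .a, .b => .z0
  | .a, .c => .ac
  | .a, .ac => .z0
  | .a, .z0 => .z0
  | .b, .e1 => .b
  | .b, .a => .a
  | .b, .b => .b
  | .b, .c => .b
  | .b, .ac => .ac
  | .b, .z0 => .z0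
  | .c, .e1 => .c
  | .c, .a => .a
  | .c, .b => .c
  | .c, .c => .c
  | .c, .ac => .ac
  | .c, .z0 => .z0
  | .ac, .e1 => .ac
  | .ac, .a => .z0
  | .ac, .b => .ac
  | .ac, .c => .ac
  | .ac, .ac => .z0
  | .ac, .z0 => .z0
  | .z0, .e1 => .z0
  | .z0, .a => .z0
  | .z0, .b => .z0
  | .z0, .c => .z0
  | .z0, .ac => .z0
  | .z0, .z0 => .z0

instance : Monoid E1M where
  one := .e1
  mul := E1M.mul
  mul_assoc := by intro x y z; cases x <;> cases y <;> cases z <;> rfl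
  one_mul := by intro x; cases x <;> rfl
  mul_one := by intro x; cases x <;> rfl
/-- The 5-element monoid `A₀¹`: identity `e1` adjoined to the semigroup `A₀ = ⟨a,b ∣ a²=a, b²=b, ab=0⟩ = {a,b,ba,0}` (`z0` is the zero). -/
inductive A01M : Type
  | e1 | a | b | ba | z0
deriving DecidableEq

/-- Multiplication of `A01M`. -/
def A01M.mul : A01M → A01M → A01M
  | .e1, .e1 => .e1
  | .e1, .a => .a
  | .e1, .b => .b
  | .e1, .ba => .ba
  | .e1, .z0 => .z0
  | .a, .e1 => .a
  | .a, .a => .a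
  | .a, .b => .z0
  | .a, .ba => .z0
  | .a, .z0 => .z0
  | .b, .e1 => .b
  | .b, .a => .ba
  | .b, .b => .b
  | .b, .ba => .ba
  | .b, .z0 => .z0
  | .ba, .e1 => .ba
  | .ba, .a => .ba
  | .ba, .b => .z0
  | .ba, .ba => .z0
  | .ba, .z0 => .z0
  | .z0, .e1 => .z0
  | .z0, .a => .z0
  | .z0, .b => .z0
  | .z0, .ba => .z0
  | .z0, .z0 => .z0

instance : Monoid A01M where
  one := .e1
  mul := A01M.mul
  mul_assoc := by intro x y z; cases x <;> cases y <;> cases z <;> rfl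
  one_mul := by intro x; cases x <;> rfl
  mul_one := by intro x; cases x <;> rfl


/-- The 3-element monoid `L₂¹`: the two-element left-zero semigroup with identity adjoined. -/
inductive LZ1 : Type
  | e | a | b
deriving DecidableEq

instance : Fintype LZ1 := ⟨{LZ1.e, LZ1.a, LZ1.b}, fun x => by cases x <;> simp⟩

instance : Monoid LZ1 where
  one := .e
  mul x y := match x with
    | .e => y
    | .a => .a
    | .b => .b
  mul_assoc := by decide
  one_mul := by decide
  mul_one := by decide

/-- The 3-element monoid `M(x) = {1, x, 0}` with `x·x = 0`. -/
inductive MX : Type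
  | e | x | z
deriving DecidableEq

instance : Fintype MX := ⟨{MX.e, MX.x, MX.z}, fun x => by cases x <;> simp⟩

instance : Monoid MX where
  one := .e
  mul a b := match a, b with
    | .e, b => b
    | a, .e => a
    | _, _ => .z
  mul_assoc := by decide
  one_mul := by decide
  mul_one := by decide

/-! ### Auxiliary development for stmt17 -/

/-- DFA states for the language `Lab`. -/
inductive St : Type
  | s0 | s1 | s2 | s3 | s4 | s5 | s6
deriving DecidableEq

instance : Fintype St :=
  ⟨{St.s0, St.s1, St.s2, St.s3, St.s4, St.s5, St.s6}, fun x => by cases x <;> simp⟩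

/-- Transition function of the minimal DFA of `Lab` (letters: `0 = a`, `1 = b`, `2 = t`,
anything else is junk). -/
def stp (s : St) (c : ℕ) : St :=
  match c with
  | 0 => match s with | .s0 => .s1 | .s1 => .s1 | .s4 => .s5 | .s5 => .s5 | _ => .s6
  | 1 => match s with | .s1 => .s2 | .s2 => .s3 | .s3 => .s3 | _ => .s6
  | 2 => match s with | .s3 => .s4 | _ => .s6
  | _ => .s6

/-- Run the DFA on a word. -/
def runW (w : Word) (s : St) : St := w.foldl stp s

lemma runW_cons (c : ℕ) (w : Word) (s : St) : runW (c :: w) s = runW w (stp s c) := rfl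

lemma runW_append (x y : Word) (s : St) : runW (x ++ y) s = runW y (runW x s) :=
  List.foldl_append ..

lemma runW_rep0_s1 (n : ℕ) : runW (List.replicate n 0) .s1 = .s1 := by
  induction n with
  | zero => rfl
  | succ n ih => rw [List.replicate_succ, runW_cons]; exact ih

lemma runW_rep1_s3 (n : ℕ) : runW (List.replicate n 1) .s3 = .s3 := by
  induction n with
  | zero => rfl
  | succ n ih => rw [List.replicate_succ, runW_cons]; exact ih

lemma runW_rep0_s5 (n : ℕ) : runW (List.replicate n 0) .s5 = .s5 := by
  induction n with
  | zero => rfl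
  | succ n ih => rw [List.replicate_succ, runW_cons]; exact ih

lemma mem_lab_run {w : Word} (h : w ∈ Lab) : runW w .s0 = .s5 := by
  obtain ⟨i, j, k, hi, hj, hk, rfl⟩ := h
  obtain ⟨i', rfl⟩ : ∃ i', i = i' + 1 := ⟨i - 1, by omega⟩
  obtain ⟨j', rfl⟩ : ∃ j', j = j' + 2 := ⟨j - 2, by omega⟩
  obtain ⟨k', rfl⟩ : ∃ k', k = k' + 1 := ⟨k - 1, by omega⟩
  have h1 : runW (List.replicate (i' + 1) 0) .s0 = .s1 := by
    rw [List.replicate_succ, runW_cons]; exact runW_rep0_s1 i'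
  have h2 : runW (List.replicate (j' + 2) 1) .s1 = .s3 := by
    rw [show j' + 2 = j' + 1 + 1 from rfl, List.replicate_succ, List.replicate_succ,
      runW_cons, runW_cons]
    exact runW_rep1_s3 j'
  have h3 : runW (2 :: List.replicate (k' + 1) 0) .s3 = .s5 := by
    rw [runW_cons, List.replicate_succ, runW_cons]; exact runW_rep0_s5 k'
  rw [runW_append, runW_append, h1, h2]
  exact h3

/-- Language associated to each state. -/
def Pst : St → Word → Prop
  | .s0, w => w = []
  | .s1, w => ∃ i, 1 ≤ i ∧ w = List.replicate i 0
  | .s2, w => ∃ i, 1 ≤ i ∧ w = List.replicate i 0 ++ [1]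
  | .s3, w => ∃ i j, 1 ≤ i ∧ 2 ≤ j ∧ w = List.replicate i 0 ++ List.replicate j 1
  | .s4, w => ∃ i j, 1 ≤ i ∧ 2 ≤ j ∧ w = List.replicate i 0 ++ List.replicate j 1 ++ [2]
  | .s5, w => w ∈ Lab
  | .s6, _ => True

lemma classify : ∀ w : Word, Pst (runW w .s0) w := by
  intro w
  induction w using List.reverseRecOn with
  | nil => exact rfl
  | append_singleton w c ih =>
    rw [runW_append]
    cases hs : runW w .s0 <;> rw [hs] at ih <;>
      rcases c with _ | _ | _ | n <;> simp only [Pst] at ih ⊢ <;> try trivial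
    · -- s0, c = 0
      subst ih; exact ⟨1, le_refl 1, rfl⟩
    · -- s1, c = 0
      obtain ⟨i, hi, rfl⟩ := ih
      exact ⟨i + 1, by omega, (List.replicate_succ' (n := i) (a := 0)).symm⟩
    · -- s1, c = 1
      obtain ⟨i, hi, rfl⟩ := ih
      exact ⟨i, hi, rfl⟩
    · -- s2, c = 1
      obtain ⟨i, hi, rfl⟩ := ih
      exact ⟨i, 2, hi, le_refl 2, by simp⟩
    · -- s3, c = 1
      obtain ⟨i, j, hi, hj, rfl⟩ := ih
      exact ⟨i, j + 1, hi, by omega, by rw [List.replicate_succ' (n := j) (a := 1), ← List.append_assoc]⟩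
    · -- s3, c = 2
      obtain ⟨i, j, hi, hj, rfl⟩ := ih
      exact ⟨i, j, hi, hj, rfl⟩
    · -- s4, c = 0
      obtain ⟨i, j, hi, hj, rfl⟩ := ih
      exact ⟨i, j, 1, hi, hj, le_refl 1, by simp⟩
    · -- s5, c = 0
      obtain ⟨i, j, k, hi, hj, hk, rfl⟩ := ih
      refine ⟨i, j, k + 1, hi, hj, by omega, ?_⟩
      rw [List.replicate_succ' (n := k) (a := 0)]
      simp
lemma lab_iff_run (w : Word) : w ∈ Lab ↔ runW w .s0 = .s5 := by
  constructor
  · exact mem_lab_run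
  · intro h
    have := classify w
    rw [h] at this
    exact this

/-! ### Three coordinates into `A1M` that jointly refine the syntactic congruence -/

/-- First letter map into `A1M`. -/
def lt1 : ℕ → A1M
  | 0 => .b | 1 => .a | 2 => .c | _ => .z0

/-- Second letter map into `A1M`. -/
def lt2 : ℕ → A1M
  | 0 => .b | 1 => .c | 2 => .e1 | _ => .e1

/-- Third letter map into `A1M`. -/
def lt3 : ℕ → A1M
  | 0 => .b | 1 => .b | 2 => .a | _ => .e1

/-- Product of the images of the letters of a word under a letter map. -/
def pA (l : ℕ → A1M) (w : Word) : A1M := (w.map l).prod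

lemma pA_nil (l : ℕ → A1M) : pA l [] = 1 := rfl

lemma pA_cons (l : ℕ → A1M) (c : ℕ) (w : Word) : pA l (c :: w) = l c * pA l w := by
  simp [pA]

lemma pA_append (l : ℕ → A1M) (x y : Word) : pA l (x ++ y) = pA l x * pA l y := by
  simp [pA]

/-- Combined state: three `A1M` coordinates plus the DFA transformation. -/
abbrev QT : Type := A1M × A1M × A1M × (St → St)

/-- One step of the combined machine. -/
def qstep (q : QT) (c : ℕ) : QT :=
  (q.1 * lt1 c, q.2.1 * lt2 c, q.2.2.1 * lt3 c, fun s => stp (q.2.2.2 s) c)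

/-- Helper to write transformations of `St`. -/
def mk7 (a b c d e f g : St) : St → St
  | .s0 => a | .s1 => b | .s2 => c | .s3 => d | .s4 => e | .s5 => f | .s6 => g

/-- All reachable combined states. -/
def RC : List QT := [
  (.a, .c, .b, mk7 .s6 .s2 .s3 .s3 .s6 .s6 .s6),
  (.a, .z0, .b, mk7 .s6 .s3 .s3 .s3 .s6 .s6 .s6),
  (.b, .b, .b, mk7 .s1 .s1 .s6 .s6 .s5 .s5 .s6),
  (.ba, .bc, .b, mk7 .s2 .s2 .s6 .s6 .s6 .s6 .s6),
  (.ba, .z0, .b, mk7 .s3 .s3 .s6 .s6 .s6 .s6 .s6),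
  (.bc, .b, .ba, mk7 .s6 .s6 .s6 .s6 .s6 .s6 .s6),
  (.bc, .b, .z0, mk7 .s6 .s6 .s6 .s6 .s6 .s6 .s6),
  (.bc, .bc, .ba, mk7 .s6 .s6 .s6 .s6 .s6 .s6 .s6),
  (.bc, .bc, .z0, mk7 .s6 .s6 .s6 .s6 .s6 .s6 .s6),
  (.bc, .z0, .ba, mk7 .s4 .s4 .s6 .s6 .s6 .s6 .s6),
  (.bc, .z0, .z0, mk7 .s5 .s5 .s6 .s6 .s6 .s6 .s6),
  (.c, .b, .z0, mk7 .s6 .s6 .s6 .s5 .s6 .s6 .s6),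
  (.c, .c, .ba, mk7 .s6 .s6 .s4 .s4 .s6 .s6 .s6),
  (.c, .c, .z0, mk7 .s6 .s6 .s5 .s5 .s6 .s6 .s6),
  (.c, .e1, .a, mk7 .s6 .s6 .s6 .s4 .s6 .s6 .s6),
  (.c, .z0, .ba, mk7 .s6 .s4 .s4 .s4 .s6 .s6 .s6),
  (.c, .z0, .z0, mk7 .s6 .s5 .s5 .s5 .s6 .s6 .s6),
  (.e1, .e1, .e1, mk7 .s0 .s1 .s2 .s3 .s4 .s5 .s6),
  (.z0, .b, .b, mk7 .s6 .s6 .s6 .s6 .s6 .s6 .s6),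
  (.z0, .b, .ba, mk7 .s6 .s6 .s6 .s6 .s6 .s6 .s6),
  (.z0, .b, .z0, mk7 .s6 .s6 .s6 .s6 .s6 .s6 .s6),
  (.z0, .bc, .b, mk7 .s6 .s6 .s6 .s6 .s6 .s6 .s6),
  (.z0, .bc, .ba, mk7 .s6 .s6 .s6 .s6 .s6 .s6 .s6),
  (.z0, .bc, .z0, mk7 .s6 .s6 .s6 .s6 .s6 .s6 .s6),
  (.z0, .c, .b, mk7 .s6 .s6 .s6 .s6 .s6 .s6 .s6),
  (.z0, .c, .ba, mk7 .s6 .s6 .s6 .s6 .s6 .s6 .s6),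
  (.z0, .c, .z0, mk7 .s6 .s6 .s6 .s6 .s6 .s6 .s6),
  (.z0, .e1, .a, mk7 .s6 .s6 .s6 .s6 .s6 .s6 .s6),
  (.z0, .e1, .e1, mk7 .s6 .s6 .s6 .s6 .s6 .s6 .s6),
  (.z0, .z0, .b, mk7 .s6 .s6 .s6 .s6 .s6 .s6 .s6),
  (.z0, .z0, .ba, mk7 .s6 .s6 .s6 .s6 .s6 .s6 .s6),
  (.z0, .z0, .z0, mk7 .s6 .s6 .s6 .s6 .s6 .s6 .s6)]

lemma qstep_mem0 : ∀ q ∈ RC, qstep q 0 ∈ RC := by decide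
lemma qstep_mem1 : ∀ q ∈ RC, qstep q 1 ∈ RC := by decide
lemma qstep_mem2 : ∀ q ∈ RC, qstep q 2 ∈ RC := by decide
lemma qstep_mem3 : ∀ q ∈ RC, qstep q 3 ∈ RC := by decide

lemma qstep_mem (q : QT) (hq : q ∈ RC) (c : ℕ) : qstep q c ∈ RC := by
  rcases c with _ | _ | _ | n
  · exact qstep_mem0 q hq
  · exact qstep_mem1 q hq
  · exact qstep_mem2 q hq
  · exact (show qstep q (n + 4) = qstep q 3 from rfl) ▸ qstep_mem3 q hq

lemma qt_functional : ∀ q ∈ RC, ∀ q' ∈ RC, q.1 = q'.1 → q.2.1 = q'.2.1 →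
    q.2.2.1 = q'.2.2.1 → q.2.2.2 = q'.2.2.2 := by decide

lemma reach' : ∀ (w : Word) (q : QT), q ∈ RC →
    (q.1 * pA lt1 w, q.2.1 * pA lt2 w, q.2.2.1 * pA lt3 w,
      fun s => runW w (q.2.2.2 s)) ∈ RC := by
  intro w
  induction w with
  | nil =>
    intro q hq
    obtain ⟨x1, x2, x3, f⟩ := q
    simpa [pA_nil, runW] using hq
  | cons c w ih =>
    intro q hq
    have h := ih (qstep q c) (qstep_mem q hq c)
    simp only [qstep] at h
    simpa [pA_cons, runW_cons, mul_assoc] using h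

/-- The start state. -/
def qt0 : QT := (1, 1, 1, fun s => s)

lemma qt0_mem : qt0 ∈ RC := by decide

lemma reach (w : Word) :
    (pA lt1 w, pA lt2 w, pA lt3 w, runW w) ∈ RC := by
  have h := reach' w qt0 qt0_mem
  simpa [qt0] using h

/-- Words realizing all 15 elements of the syntactic monoid. -/
def CtxW : List Word := [[], [0], [1], [2], [3], [0, 1], [1, 1], [1, 2], [2, 0],
  [0, 1, 1], [1, 1, 2], [1, 2, 0], [0, 1, 1, 2], [1, 1, 2, 0], [0, 1, 1, 2, 0]]

set_option maxHeartbeats 4000000 in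
lemma qt_sep : ∀ q ∈ RC, ∀ q' ∈ RC,
    (∀ p ∈ CtxW, ∀ s ∈ CtxW,
      (runW s (q.2.2.2 (runW p .s0)) = .s5 ↔ runW s (q'.2.2.2 (runW p .s0)) = .s5)) →
    q.2.2.2 = q'.2.2.2 := by decide

/-- Syntactically equivalent words have the same DFA behaviour. -/
lemma run_eq_of_sim {U V : Word}
    (h : ∀ p s : Word, p ++ U ++ s ∈ Lab ↔ p ++ V ++ s ∈ Lab) : runW U = runW V := by
  have hU := reach U
  have hV := reach V
  refine qt_sep _ hU _ hV ?_
  intro p hp s hs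
  have := h p s
  rw [lab_iff_run, lab_iff_run, runW_append, runW_append, runW_append, runW_append] at this
  exact this

/-! ### Embedding of `A1M` into the syntactic monoid -/

/-- Representative words for the elements of `A1M`
(`e1 ↦ 1`, `a ↦ bb`, `b ↦ a`, `c ↦ bbta`, `ba ↦ abb`, `bc ↦ abbta`, `z0 ↦ d`). -/
def gw : A1M → Word
  | .e1 => []
  | .a => [1, 1]
  | .b => [0]
  | .c => [1, 1, 2, 0]
  | .ba => [0, 1, 1]
  | .bc => [0, 1, 1, 2, 0]
  | .z0 => [3]

/-- The DFA behaviour of the representative word. -/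
def EA (q : A1M) : St → St := runW (gw q)

lemma EA_hom (x y : A1M) (s : St) : EA (x * y) s = EA y (EA x s) := by
  cases x <;> cases y <;> cases s <;> rfl

lemma EA_inj : ∀ x y : A1M, EA x = EA y → x = y := by
  intro x y h
  cases x <;> cases y <;> first
    | rfl
    | exact absurd h (by decide)

lemma run_flat_EA (φ : ℕ → A1M) :
    ∀ (u : Word) (x : A1M) (s : St),
      runW ((u.map fun n => gw (φ n)).flatten) (EA x s) = EA (x * (u.map φ).prod) s := by
  intro u
  induction u with
  | nil => intro x s; simp [runW, EA]
  | cons c u ih =>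
    intro x s
    simp only [List.map_cons, List.flatten_cons, List.prod_cons]
    rw [runW_append]
    have h1 : runW (gw (φ c)) (EA x s) = EA (x * φ c) s := (EA_hom x (φ c) s).symm
    rw [h1, ih (x * φ c) s, mul_assoc]

lemma toList_listProd (l : List (FreeMonoid ℕ)) :
    FreeMonoid.toList l.prod = (l.map FreeMonoid.toList).flatten := by
  induction l with
  | nil => rfl
  | cons x l ih => simp [FreeMonoid.toList_mul, ih]

theorem stmt17' :
    ∀ u v : Word, Satisfies A1M u v ↔ Satisfies (SyntMonoid Lab) u v := by
  intro u v
  constructor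
  · -- identities of A1M hold in the syntactic monoid
    intro hA φ
    choose σ hσ using fun x => Con.mk'_surjective (c := SyntCon Lab) (φ x)
    have hφ : φ = fun x => (SyntCon Lab).mk' (σ x) := funext fun x => (hσ x).symm
    rw [hφ]
    have key : ∀ w : Word, (w.map fun x => (SyntCon Lab).mk' (σ x)).prod =
        (SyntCon Lab).mk' ((w.map σ).prod) := by
      intro w
      rw [show (w.map fun x => (SyntCon Lab).mk' (σ x)) =
        ((w.map σ).map (SyntCon Lab).mk') by rw [List.map_map]; rfl]
      exact (map_list_prod ((SyntCon Lab).mk') _).symm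
    rw [key u, key v]
    -- reduce to the syntactic congruence
    have : (SyntCon Lab) ((u.map σ).prod) ((v.map σ).prod) := by
      set τ : ℕ → Word := fun x => FreeMonoid.toList (σ x) with hτ
      have hT : ∀ w : Word, FreeMonoid.toList ((w.map σ).prod) = (w.map τ).flatten := by
        intro w
        rw [toList_listProd, List.map_map]
        rfl
      -- A1M coordinates agree
      have hco : ∀ l : ℕ → A1M, pA l ((u.map τ).flatten) = pA l ((v.map τ).flatten) := by
        intro l
        have hpf : ∀ w : Word, pA l ((w.map τ).flatten) =
            (w.map fun x => pA l (τ x)).prod := by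
          intro w
          induction w with
          | nil => rfl
          | cons c w ih =>
            simp only [List.map_cons, List.flatten_cons, List.prod_cons, pA_append, ih]
        rw [hpf u, hpf v]
        exact hA fun x => pA l (τ x)
      -- hence the DFA behaviours agree
      have hrun : runW ((u.map τ).flatten) = runW ((v.map τ).flatten) := by
        have hu := reach ((u.map τ).flatten)
        have hv := reach ((v.map τ).flatten)
        exact qt_functional _ hu _ hv (hco lt1) (hco lt2) (hco lt3)
      intro p s
      rw [hT u, hT v, lab_iff_run, lab_iff_run, runW_append, runW_append, runW_append,
        runW_append, hrun]
    exact (Con.eq (SyntCon Lab)).mpr this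
  · -- identities of the syntactic monoid hold in A1M
    intro hS φ
    set σ : ℕ → Word := fun x => gw (φ x) with hσdef
    have h := hS fun x => (SyntCon Lab).mk' (FreeMonoid.ofList (σ x))
    have key : ∀ w : Word, (w.map fun x => (SyntCon Lab).mk' (FreeMonoid.ofList (σ x))).prod =
        (SyntCon Lab).mk' ((w.map fun x => FreeMonoid.ofList (σ x)).prod) := by
      intro w
      rw [show (w.map fun x => (SyntCon Lab).mk' (FreeMonoid.ofList (σ x))) =
        ((w.map fun x => FreeMonoid.ofList (σ x)).map (SyntCon Lab).mk') by
          rw [List.map_map]; rfl]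
      exact (map_list_prod ((SyntCon Lab).mk') _).symm
    rw [key u, key v] at h
    have hc : (SyntCon Lab) ((u.map fun x => FreeMonoid.ofList (σ x)).prod)
        ((v.map fun x => FreeMonoid.ofList (σ x)).prod) := (Con.eq (SyntCon Lab)).mp h
    have hT : ∀ w : Word, FreeMonoid.toList ((w.map fun x => FreeMonoid.ofList (σ x)).prod) =
        (w.map σ).flatten := by
      intro w
      rw [toList_listProd, List.map_map]
      congr 1
    have hsim : ∀ p s : Word, p ++ (u.map σ).flatten ++ s ∈ Lab ↔
        p ++ (v.map σ).flatten ++ s ∈ Lab := by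
      intro p s
      have := hc p s
      rwa [hT u, hT v] at this
    have hrun := run_eq_of_sim hsim
    have hEu : runW ((u.map σ).flatten) = EA ((u.map φ).prod) := by
      funext s
      have := run_flat_EA φ u 1 s
      rwa [one_mul, show EA 1 s = s from rfl] at this
    have hEv : runW ((v.map σ).flatten) = EA ((v.map φ).prod) := by
      funext s
      have := run_flat_EA φ v 1 s
      rwa [one_mul, show EA 1 s = s from rfl] at this
    exact EA_inj _ _ (hEu ▸ hEv ▸ hrun)

theorem stmt17 :
    ∀ u v : Word, Satisfies A1M u v ↔ Satisfies (SyntMonoid Lab) u v := stmt17'
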